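/- arXiv:quant-ph/0307190 — 2 statements merged into one kernel-verified Lean document; each statement's English description precedes it below -/
import Mathlib

section
/- Under the hypotheses of the canonical decomposition (U = (A₁⊗B₁) exp(i H_U) (A₂⊗B₂) with H_U = θx X⊗X + θy Y⊗Y + θz Z⊗Z and unit-determinant local factors), the multiset of eigenvalues of U Ũ equals {e^{2iφ₁}, e^{2iφ₂}, e^{2iφ₃}, e^{2iφ₄}}, where φ₁ = θx+θy−θz, φ₂ = θx−θy+θz, φ₃ = −θx+θy+θz, φ₄ = −θx−θy−θz. -/
open Matrix Kronecker

noncomputable def PauliX : Matrix (Fin 2) (Fin 2) ℂ := !![0, 1; 1, 0]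
noncomputable def PauliY : Matrix (Fin 2) (Fin 2) ℂ := !![0, -Complex.I; Complex.I, 0]
noncomputable def PauliZ : Matrix (Fin 2) (Fin 2) ℂ := !![1, 0; 0, -1]

/-- The spin flip of a 4×4 matrix: `M̃ = (Y ⊗ Y) Mᵀ (Y ⊗ Y)`. -/
noncomputable def spinFlip (M : Matrix (Fin 2 × Fin 2) (Fin 2 × Fin 2) ℂ) :
    Matrix (Fin 2 × Fin 2) (Fin 2 × Fin 2) ℂ :=
  (PauliY ⊗ₖ PauliY) * Mᵀ * (PauliY ⊗ₖ PauliY)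

/-- The canonical two-qubit Hamiltonian `θx X⊗X + θy Y⊗Y + θz Z⊗Z`. -/
noncomputable def canonicalHam (θx θy θz : ℝ) :
    Matrix (Fin 2 × Fin 2) (Fin 2 × Fin 2) ℂ :=
  (θx : ℂ) • (PauliX ⊗ₖ PauliX) + (θy : ℂ) • (PauliY ⊗ₖ PauliY) +
    (θz : ℂ) • (PauliZ ⊗ₖ PauliZ)

/-! `U Ũ` is invariant, up to conjugation, under local factors of unit determinant, because
the spin flip of `A ⊗ B` is `adj A ⊗ adj B`. The canonical Hamiltonian is invariant under the
spin flip (each Pauli matrix has adjugate `-σ`), so `E = exp (i H_U)` satisfies `E Ẽ = E² =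
exp (2 i H_U)`, whose eigenvalues `e^{2iφⱼ}` are read off in the magic basis, which
diagonalizes `H_U`. -/

open Polynomial

local notation "YY" => PauliY ⊗ₖ PauliY

theorem PauliY_mul_self : PauliY * PauliY = 1 := by
  ext i j
  fin_cases i <;> fin_cases j <;> simp [PauliY, Matrix.mul_apply]

theorem pauliYY_mul_self : YY * YY = 1 := by
  rw [← mul_kronecker_mul, PauliY_mul_self, one_kronecker_one]

theorem pauliYY_mul_pauliYY_mul (M : Matrix (Fin 2 × Fin 2) (Fin 2 × Fin 2) ℂ) :
    YY * (YY * M) = M := by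
  rw [← Matrix.mul_assoc, pauliYY_mul_self, Matrix.one_mul]

theorem PauliY_mul_transpose_mul_PauliY (A : Matrix (Fin 2) (Fin 2) ℂ) :
    PauliY * Aᵀ * PauliY = adjugate A := by
  rw [adjugate_fin_two]
  ext i j
  fin_cases i <;> fin_cases j <;>
    simp [PauliY, Matrix.mul_apply, vecMul, dotProduct, Fin.sum_univ_two] <;>
    ring_nf <;> simp [Complex.I_sq]

theorem adjugate_PauliX : adjugate PauliX = -PauliX := by
  rw [adjugate_fin_two]; ext i j; fin_cases i <;> fin_cases j <;> simp [PauliX]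

theorem adjugate_PauliY : adjugate PauliY = -PauliY := by
  rw [adjugate_fin_two]; ext i j; fin_cases i <;> fin_cases j <;> simp [PauliY]

theorem adjugate_PauliZ : adjugate PauliZ = -PauliZ := by
  rw [adjugate_fin_two]; ext i j; fin_cases i <;> fin_cases j <;> simp [PauliZ]

theorem spinFlip_mul (M N : Matrix (Fin 2 × Fin 2) (Fin 2 × Fin 2) ℂ) :
    spinFlip (M * N) = spinFlip N * spinFlip M := by
  simp only [spinFlip, transpose_mul, Matrix.mul_assoc, pauliYY_mul_pauliYY_mul]

theorem spinFlip_add (M N : Matrix (Fin 2 × Fin 2) (Fin 2 × Fin 2) ℂ) :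
    spinFlip (M + N) = spinFlip M + spinFlip N := by
  simp only [spinFlip, transpose_add, Matrix.mul_add, Matrix.add_mul]

theorem spinFlip_smul (c : ℂ) (M : Matrix (Fin 2 × Fin 2) (Fin 2 × Fin 2) ℂ) :
    spinFlip (c • M) = c • spinFlip M := by
  simp only [spinFlip, transpose_smul, Matrix.mul_smul, Matrix.smul_mul]

theorem spinFlip_kronecker (A B : Matrix (Fin 2) (Fin 2) ℂ) :
    spinFlip (A ⊗ₖ B) = adjugate A ⊗ₖ adjugate B := by
  rw [spinFlip, ← kroneckerMap_transpose, ← mul_kronecker_mul, ← mul_kronecker_mul,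
    PauliY_mul_transpose_mul_PauliY, PauliY_mul_transpose_mul_PauliY]

theorem spinFlip_exp (M : Matrix (Fin 2 × Fin 2) (Fin 2 × Fin 2) ℂ) :
    spinFlip (NormedSpace.exp M) = NormedSpace.exp (spinFlip M) := by
  let S : (Matrix (Fin 2 × Fin 2) (Fin 2 × Fin 2) ℂ)ˣ :=
    ⟨YY, YY, pauliYY_mul_self, pauliYY_mul_self⟩
  rw [spinFlip, spinFlip, ← exp_transpose]
  exact (exp_units_conj S Mᵀ).symm

theorem spinFlip_canonicalHam (θx θy θz : ℝ) :
    spinFlip (canonicalHam θx θy θz) = canonicalHam θx θy θz := by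
  have neg_kronecker_neg (P : Matrix (Fin 2) (Fin 2) ℂ) : (-P) ⊗ₖ (-P) = P ⊗ₖ P := by
    ext; simp
  simp only [canonicalHam, spinFlip_add, spinFlip_smul, spinFlip_kronecker, adjugate_PauliX,
    adjugate_PauliY, adjugate_PauliZ, neg_kronecker_neg]

theorem kronecker_mul_spinFlip_kronecker (A B : Matrix (Fin 2) (Fin 2) ℂ) :
    (A ⊗ₖ B) * spinFlip (A ⊗ₖ B) = (A.det * B.det) • 1 := by
  rw [spinFlip_kronecker, ← mul_kronecker_mul, mul_adjugate, mul_adjugate, smul_kronecker,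
    kronecker_smul, one_kronecker_one, smul_smul]

theorem spinFlip_kronecker_mul_kronecker (A B : Matrix (Fin 2) (Fin 2) ℂ) :
    spinFlip (A ⊗ₖ B) * (A ⊗ₖ B) = (A.det * B.det) • 1 := by
  rw [spinFlip_kronecker, ← mul_kronecker_mul, adjugate_mul, adjugate_mul, smul_kronecker,
    kronecker_smul, one_kronecker_one, smul_smul]

theorem charpoly_mul_spinFlip_kronecker_conj (A₁ B₁ A₂ B₂ : Matrix (Fin 2) (Fin 2) ℂ)
    (h₁ : A₁.det * B₁.det = 1) (h₂ : A₂.det * B₂.det = 1)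
    (M : Matrix (Fin 2 × Fin 2) (Fin 2 × Fin 2) ℂ) :
    ((A₁ ⊗ₖ B₁) * M * (A₂ ⊗ₖ B₂) * spinFlip ((A₁ ⊗ₖ B₁) * M * (A₂ ⊗ₖ B₂))).charpoly =
      (M * spinFlip M).charpoly := by
  have hU : (A₁ ⊗ₖ B₁) * M * (A₂ ⊗ₖ B₂) * spinFlip ((A₁ ⊗ₖ B₁) * M * (A₂ ⊗ₖ B₂)) =
      (A₁ ⊗ₖ B₁) * (M * spinFlip M * spinFlip (A₁ ⊗ₖ B₁)) := by
    simp only [spinFlip_mul, Matrix.mul_assoc]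
    rw [← Matrix.mul_assoc (A₂ ⊗ₖ B₂), kronecker_mul_spinFlip_kronecker, h₂, one_smul,
      Matrix.one_mul]
  rw [hU, charpoly_mul_comm, Matrix.mul_assoc, spinFlip_kronecker_mul_kronecker, h₁, one_smul,
    Matrix.mul_one]

/-- Columns: `|01⟩ + |10⟩`, `|00⟩ + |11⟩`, `|00⟩ - |11⟩`, `|01⟩ - |10⟩`, the unnormalized
magic basis. -/
def magicBasis : Matrix (Fin 2 × Fin 2) (Fin 2 × Fin 2) ℂ := fun i j =>
  !![(!![0, 1; 1, 0] : Matrix (Fin 2) (Fin 2) ℂ), !![1, 0; 0, 1];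
    !![1, 0; 0, 1], !![0, -1; -1, 0]] i.1 j.1 i.2 j.2

theorem magicBasis_mul_transpose : magicBasis * magicBasisᵀ = (2 : ℂ) • 1 := by
  ext i j
  fin_cases i <;> fin_cases j <;>
    simp [magicBasis, Matrix.mul_apply, Fintype.sum_prod_type] <;> norm_num

noncomputable def magicBasisUnit : (Matrix (Fin 2 × Fin 2) (Fin 2 × Fin 2) ℂ)ˣ :=
  have h : magicBasis * ((1 / 2 : ℂ) • magicBasisᵀ) = 1 := by
    rw [Matrix.mul_smul, magicBasis_mul_transpose, smul_smul]; norm_num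
  ⟨magicBasis, (1 / 2 : ℂ) • magicBasisᵀ, h, mul_eq_one_comm.mp h⟩

def canonicalPhase (θx θy θz : ℝ) : Fin 2 × Fin 2 → ℝ := fun j =>
  !![θx + θy - θz, θx - θy + θz; -θx + θy + θz, -θx - θy - θz] j.1 j.2

theorem canonicalHam_mul_magicBasis (θx θy θz : ℝ) :
    canonicalHam θx θy θz * magicBasis =
      magicBasis * diagonal (fun j => (canonicalPhase θx θy θz j : ℂ)) := by
  ext i j
  fin_cases i <;> fin_cases j <;>
    simp [canonicalHam, magicBasis, canonicalPhase, PauliX, PauliY, PauliZ, Matrix.mul_apply,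
      Fintype.sum_prod_type] <;> ring

theorem charpoly_exp_smul_canonicalHam (c : ℂ) (θx θy θz : ℝ) :
    (NormedSpace.exp (c • canonicalHam θx θy θz)).charpoly =
      (diagonal fun j => Complex.exp (c * canonicalPhase θx θy θz j)).charpoly := by
  have hconj : canonicalHam θx θy θz =
      magicBasisUnit * diagonal (fun j => (canonicalPhase θx θy θz j : ℂ)) *
        (↑magicBasisUnit⁻¹ : Matrix (Fin 2 × Fin 2) (Fin 2 × Fin 2) ℂ) := by
    rw [Units.eq_mul_inv_iff_mul_eq]
    exact canonicalHam_mul_magicBasis θx θy θz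
  rw [hconj, ← Matrix.smul_mul, ← Matrix.mul_smul, ← diagonal_smul, exp_units_conj,
    charpoly_mul_comm, ← Matrix.mul_assoc, Units.inv_mul, Matrix.one_mul, exp_diagonal]
  congr 2
  funext j
  simp [Complex.exp_eq_exp_ℂ]

theorem roots_charpoly_diagonal {R n : Type*} [CommRing R] [IsDomain R] [Fintype n]
    [DecidableEq n] (d : n → R) :
    (diagonal d).charpoly.roots = Finset.univ.val.map d := by
  rw [charpoly_diagonal, Finset.prod_eq_multiset_prod]
  simpa [Multiset.map_map, Function.comp_def] using
    roots_multiset_prod_X_sub_C (Finset.univ.val.map d)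

theorem exp_I_smul_canonicalHam_mul_spinFlip (θx θy θz : ℝ) :
    NormedSpace.exp (Complex.I • canonicalHam θx θy θz) *
        spinFlip (NormedSpace.exp (Complex.I • canonicalHam θx θy θz)) =
      NormedSpace.exp ((2 * Complex.I) • canonicalHam θx θy θz) := by
  rw [spinFlip_exp, spinFlip_smul, spinFlip_canonicalHam,
    ← Matrix.exp_add_of_commute _ _ (Commute.refl _), ← two_smul ℂ, smul_smul]

theorem stmt_16_general (θx θy θz : ℝ) (A₁ B₁ A₂ B₂ : Matrix (Fin 2) (Fin 2) ℂ)
    (hdA₁ : A₁.det = 1) (hdB₁ : B₁.det = 1) (hdA₂ : A₂.det = 1) (hdB₂ : B₂.det = 1)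
    (U : Matrix (Fin 2 × Fin 2) (Fin 2 × Fin 2) ℂ)
    (hU : U = (A₁ ⊗ₖ B₁) * NormedSpace.exp (Complex.I • canonicalHam θx θy θz) * (A₂ ⊗ₖ B₂)) :
    (U * spinFlip U).charpoly.roots =
      {Complex.exp (2 * Complex.I * (θx + θy - θz)),
       Complex.exp (2 * Complex.I * (θx - θy + θz)),
       Complex.exp (2 * Complex.I * (-θx + θy + θz)),
       Complex.exp (2 * Complex.I * (-θx - θy - θz))} := by
  subst hU
  rw [charpoly_mul_spinFlip_kronecker_conj A₁ B₁ A₂ B₂ (by rw [hdA₁, hdB₁, one_mul])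
      (by rw [hdA₂, hdB₂, one_mul]), exp_I_smul_canonicalHam_mul_spinFlip,
    charpoly_exp_smul_canonicalHam, roots_charpoly_diagonal]
  have huniv : (Finset.univ.val : Multiset (Fin 2 × Fin 2)) = {(0, 0), (0, 1), (1, 0), (1, 1)} :=
    rfl
  simp [huniv, canonicalPhase]

theorem stmt_16 (θx θy θz : ℝ) (A₁ B₁ A₂ B₂ : Matrix (Fin 2) (Fin 2) ℂ)
    (hA₁ : A₁ ∈ Matrix.unitaryGroup (Fin 2) ℂ) (hB₁ : B₁ ∈ Matrix.unitaryGroup (Fin 2) ℂ)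
    (hA₂ : A₂ ∈ Matrix.unitaryGroup (Fin 2) ℂ) (hB₂ : B₂ ∈ Matrix.unitaryGroup (Fin 2) ℂ)
    (hdA₁ : A₁.det = 1) (hdB₁ : B₁.det = 1) (hdA₂ : A₂.det = 1) (hdB₂ : B₂.det = 1)
    (U : Matrix (Fin 2 × Fin 2) (Fin 2 × Fin 2) ℂ)
    (hU : U = (A₁ ⊗ₖ B₁) * NormedSpace.exp (Complex.I • canonicalHam θx θy θz) * (A₂ ⊗ₖ B₂)) :
    (U * spinFlip U).charpoly.roots =
      {Complex.exp (2 * Complex.I * (θx + θy - θz)),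
       Complex.exp (2 * Complex.I * (θx - θy + θz)),
       Complex.exp (2 * Complex.I * (-θx + θy + θz)),
       Complex.exp (2 * Complex.I * (-θx - θy - θz))} :=
  stmt_16_general θx θy θz A₁ B₁ A₂ B₂ hdA₁ hdB₁ hdA₂ hdB₂ U hU
end

section
/- Suppose φ₁ ≥ φ₂ ≥ φ₃ ≥ φ₄ are real numbers with φ₁+φ₂+φ₃+φ₄ = 0 and φ₁ − φ₄ ≤ π, and each φⱼ ∈ (−3π/4, 3π/4]. Define Sⱼ ∈ (−π/4, 3π/4] by 2Sⱼ = arg(e^{2iφⱼ}) taken over the branch (−π/2, 3π/2]. Then S₁+S₂+S₃+S₄ = πn where n is the number of indices j with φⱼ ≤ −π/4, and subtracting π from the n largest values of the Sⱼ recovers exactly the multiset {φ₁, φ₂, φ₃, φ₄}. -/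
open Finset

/-- The entries of `x` rearranged into nonincreasing order. -/
noncomputable def sortDesc {n : ℕ} (x : Fin n → ℝ) : Fin n → ℝ :=
  fun i => -((-x) (Tuple.sort (-x) i))

/-- `Majorizes x y` means `x ≺ y`: every partial sum of the `k` largest entries of `x`
is at most the corresponding partial sum for `y`, with equality for the total sum. -/
noncomputable def Majorizes {n : ℕ} (x y : Fin n → ℝ) : Prop :=
  (∀ k : ℕ, k ≤ n →
      ∑ i ∈ univ.filter (fun i : Fin n => (i : ℕ) < k), sortDesc x i ≤
        ∑ i ∈ univ.filter (fun i : Fin n => (i : ℕ) < k), sortDesc y i) ∧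
  ∑ i, x i = ∑ i, y i

/-! Since the spread of `φ` is at most `π`, adding `π` to the entries `φⱼ ≤ -π/4` lifts them
above all the others. Sorting `S` therefore lists the shifted block first and the unshifted
block after it, and removing `π` from the first `n` entries returns the two blocks of `φ`, a
rearrangement of `φ`. The sum is `∑ φⱼ = 0` plus `n` shifts by `π`. -/

lemma antitone_sortDesc {m : ℕ} (x : Fin m → ℝ) : Antitone (sortDesc x) :=
  fun _ _ hij => neg_le_neg (Tuple.monotone_sort (-x) hij)

lemma ofFn_sortDesc_perm {m : ℕ} (x : Fin m → ℝ) :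
    (List.ofFn (sortDesc x)).Perm (List.ofFn x) := by
  have h : sortDesc x = x ∘ Tuple.sort (-x) := by funext i; simp [sortDesc]
  rw [h]
  exact (Tuple.sort (-x)).ofFn_comp_perm x

lemma ofFn_sortDesc_eq_of_perm {m : ℕ} {x : Fin m → ℝ} {l : List ℝ} (hl : l.SortedGE)
    (hperm : l.Perm (List.ofFn x)) : List.ofFn (sortDesc x) = l :=
  ((ofFn_sortDesc_perm x).trans hperm.symm).eq_of_sortedGE
    (List.sortedGE_ofFn_iff.mpr (antitone_sortDesc x)) hl

lemma ofFn_sub_eq_of_ofFn_eq_map_add_append {m : ℕ} {y : Fin m → ℝ} {p : ℝ} {l₁ l₂ : List ℝ}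
    (hy : List.ofFn y = l₁.map (· + p) ++ l₂) :
    List.ofFn (fun j => y j - if (j : ℕ) < l₁.length then p else 0) = l₁ ++ l₂ := by
  have hlen : m = l₁.length + l₂.length := by simpa using congrArg List.length hy
  refine List.ext_getElem (by simp [hlen]) fun i hi _ => ?_
  have hi' : i < m := by simpa using hi
  have hyi : y ⟨i, hi'⟩ = (l₁.map (· + p) ++ l₂)[i]'(by simp; omega) := by
    simp only [← hy, List.getElem_ofFn]
  rw [List.getElem_ofFn, hyi]
  by_cases h : i < l₁.length <;> simp [List.getElem_append, h]

noncomputable def shiftBelow {m : ℕ} (c p : ℝ) (φ : Fin m → ℝ) : Fin m → ℝ :=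
  fun j => if φ j ≤ c then φ j + p else φ j

section ShiftBelow

variable {m : ℕ} (c p : ℝ) (φ : Fin m → ℝ)

lemma sum_shiftBelow :
    ∑ j, shiftBelow c p φ j = ∑ j, φ j + #{j | φ j ≤ c} * p := by
  have h : shiftBelow c p φ = fun j => φ j + if φ j ≤ c then p else 0 := by
    funext j; simp only [shiftBelow]; split_ifs <;> simp
  rw [h, sum_add_distrib, sum_ite, sum_const_zero, add_zero, sum_const, nsmul_eq_mul]

lemma length_filter_ofFn :
    ((List.ofFn φ).filter (· ≤ c)).length = #{j | φ j ≤ c} := by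
  have h := congrArg Multiset.card (Multiset.filter_map (· ≤ c) φ univ.val)
  simp only [Fin.univ_val_map, Multiset.filter_coe, Multiset.coe_card, Multiset.card_map] at h
  rw [h]
  rfl

lemma ofFn_sortDesc_shiftBelow (hφ : Antitone φ) (hwidth : ∀ i j, φ i ≤ φ j + p) :
    List.ofFn (sortDesc (shiftBelow c p φ)) =
      ((List.ofFn φ).filter (· ≤ c)).map (· + p) ++ (List.ofFn φ).filter (fun x => !(x ≤ c)) := by
  have hsorted : (List.ofFn φ).Pairwise (· ≥ ·) := (List.sortedGE_ofFn_iff.mpr hφ).pairwise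
  apply ofFn_sortDesc_eq_of_perm
  · rw [List.sortedGE_iff_pairwise, List.pairwise_append, List.pairwise_map]
    refine ⟨(hsorted.filter _).imp fun h => (add_le_add_iff_right p).mpr h, hsorted.filter _, ?_⟩
    intro a ha b hb
    simp only [List.mem_map, List.mem_filter, List.mem_ofFn] at ha hb
    obtain ⟨_, ⟨⟨i, rfl⟩, -⟩, rfl⟩ := ha
    obtain ⟨⟨j, rfl⟩, -⟩ := hb
    exact hwidth j i
  · have hmap : List.ofFn (shiftBelow c p φ) =
        (List.ofFn φ).map fun x => if x ≤ c then x + p else x := by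
      rw [List.map_ofFn]; rfl
    rw [hmap]
    refine List.Perm.trans ?_ ((List.filter_append_perm (· ≤ c) (List.ofFn φ)).map _)
    rw [List.map_append]
    refine List.Perm.of_eq (congrArg₂ _ (List.map_congr_left fun x hx => ?_) ?_)
    · simp_all
    · refine ((List.map_congr_left fun x hx => ?_).trans (List.map_id _)).symm
      simp_all

lemma map_sortDesc_shiftBelow_sub (hφ : Antitone φ) (hwidth : ∀ i j, φ i ≤ φ j + p) :
    Multiset.map (fun j : Fin m => sortDesc (shiftBelow c p φ) j -
        if (j : ℕ) < #{j | φ j ≤ c} then p else 0) univ.val =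
      Multiset.map φ univ.val := by
  rw [Fin.univ_val_map, Fin.univ_val_map, Multiset.coe_eq_coe, ← length_filter_ofFn,
    ofFn_sub_eq_of_ofFn_eq_map_add_append (ofFn_sortDesc_shiftBelow c p φ hφ hwidth)]
  exact List.filter_append_perm _ _

end ShiftBelow

theorem stmt_17_general (φ : Fin 4 → ℝ)
    (hord : φ 0 ≥ φ 1 ∧ φ 1 ≥ φ 2 ∧ φ 2 ≥ φ 3)
    (hsum : φ 0 + φ 1 + φ 2 + φ 3 = 0)
    (hspread : φ 0 - φ 3 ≤ Real.pi)
    (S : Fin 4 → ℝ)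
    (hS : S = fun j => if φ j ≤ -(Real.pi / 4) then φ j + Real.pi else φ j)
    (n : ℕ)
    (hn : n = (univ.filter (fun j : Fin 4 => φ j ≤ -(Real.pi / 4))).card) :
    (∑ j, S j = Real.pi * n) ∧
    Multiset.map (fun j : Fin 4 => sortDesc S j - if (j : ℕ) < n then Real.pi else 0)
        Finset.univ.val =
      Multiset.map φ Finset.univ.val := by
  obtain ⟨h01, h12, h23⟩ := hord
  have hφ : Antitone φ := by
    simp only [Fin.antitone_iff_succ_le, Fin.forall_fin_succ, IsEmpty.forall_iff]
    exact ⟨h01, h12, h23, trivial⟩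
  have hwidth : ∀ i j, φ i ≤ φ j + Real.pi := fun i j => by
    linarith [hφ (Fin.zero_le i), hφ (show j ≤ 3 from Fin.le_last j)]
  change S = shiftBelow (-(Real.pi / 4)) Real.pi φ at hS
  subst hS hn
  refine ⟨?_, map_sortDesc_shiftBelow_sub _ _ φ hφ hwidth⟩
  rw [sum_shiftBelow, Fin.sum_univ_four, hsum, zero_add, mul_comm]

theorem stmt_17 (φ : Fin 4 → ℝ)
    (hord : φ 0 ≥ φ 1 ∧ φ 1 ≥ φ 2 ∧ φ 2 ≥ φ 3)
    (hsum : φ 0 + φ 1 + φ 2 + φ 3 = 0)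
    (hspread : φ 0 - φ 3 ≤ Real.pi)
    (hrange : ∀ j, -(3 * Real.pi / 4) < φ j ∧ φ j ≤ 3 * Real.pi / 4)
    (S : Fin 4 → ℝ)
    (hS : S = fun j => if φ j ≤ -(Real.pi / 4) then φ j + Real.pi else φ j)
    (n : ℕ)
    (hn : n = (univ.filter (fun j : Fin 4 => φ j ≤ -(Real.pi / 4))).card) :
    (∑ j, S j = Real.pi * n) ∧
    Multiset.map (fun j : Fin 4 => sortDesc S j - if (j : ℕ) < n then Real.pi else 0)
        Finset.univ.val =
      Multiset.map φ Finset.univ.val :=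
  stmt_17_general φ hord hsum hspread S hS n hn
end
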